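/- Let V ⊆ ℝ^15 be the span of the nine reaction vectors of N_{F,1} ∪ N_{F,3}: e_4, e_8 - e_1 - e_4, e_1 + e_4 - e_8, -e_10, -e_4, e_25 - e_8, e_1 + e_10 - e_25, e_13 - e_12, e_12 - e_13 (basis vectors indexed by species A_1, A_2, A_4, A_6, A_7, A_8, A_10, A_12, A_13, A_23, A_24, A_25, A_26, A_27, A_28). Let W_1 be the span of the subset {e_4, e_8 - e_1 - e_4, e_1 + e_4 - e_8, e_13 - e_12, e_12 - e_13, -e_4} (the reaction vectors of N_FM) and W_2 the span of the complementary subset {-e_10, e_25 - e_8, e_1 + e_10 - e_25}. Then dim V = 5, dim W_1 = 3, and dim W_2 = 3; in particular dim W_1 + dim W_2 = 6 > 5 = dim V, so the sum W_1 + W_2 is not direct. -/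
import Mathlib


/-- standard basis vector of `ℝ^15`, coordinates indexed by the species
`A_1, A_2, A_4, A_6, A_7, A_8, A_10, A_12, A_13, A_23, A_24, A_25, A_26, A_27, A_28`
(in this order). -/
noncomputable def eF (i : Fin 15) : Fin 15 → ℝ := Pi.single i 1

/-- `V`: span of the nine reaction vectors of `N_{F,1} ∪ N_{F,3}`. -/
noncomputable def Vspan : Submodule ℝ (Fin 15 → ℝ) :=
  Submodule.span ℝ
    ({eF 2, eF 5 - eF 0 - eF 2, eF 0 + eF 2 - eF 5, -eF 6, -eF 2,
      eF 11 - eF 5, eF 0 + eF 6 - eF 11, eF 8 - eF 7, eF 7 - eF 8} :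
      Set (Fin 15 → ℝ))

/-- `W_1`: span of the reaction vectors of `N_FM`. -/
noncomputable def W1span : Submodule ℝ (Fin 15 → ℝ) :=
  Submodule.span ℝ
    ({eF 2, eF 5 - eF 0 - eF 2, eF 0 + eF 2 - eF 5, eF 8 - eF 7, eF 7 - eF 8,
      -eF 2} : Set (Fin 15 → ℝ))

/-- `W_2`: span of the complementary reaction vectors. -/
noncomputable def W2span : Submodule ℝ (Fin 15 → ℝ) :=
  Submodule.span ℝ
    ({-eF 6, eF 11 - eF 5, eF 0 + eF 6 - eF 11} : Set (Fin 15 → ℝ))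

/- ### Auxiliary bases -/

noncomputable def vV : Fin 5 → (Fin 15 → ℝ) :=
  ![eF 2, eF 5 - eF 0, eF 6, eF 11 - eF 5, eF 8 - eF 7]

noncomputable def vW1 : Fin 3 → (Fin 15 → ℝ) :=
  ![eF 2, eF 5 - eF 0, eF 8 - eF 7]

noncomputable def vW2 : Fin 3 → (Fin 15 → ℝ) :=
  ![-eF 6, eF 11 - eF 5, eF 0 + eF 6 - eF 11]

lemma liV : LinearIndependent ℝ vV := by
  rw [Fintype.linearIndependent_iff]
  intro g hg
  have h2 := congrFun hg 2
  have h0 := congrFun hg 0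
  have h6 := congrFun hg 6
  have h11 := congrFun hg 11
  have h8 := congrFun hg 8
  simp [vV, eF, Fin.sum_univ_five, Pi.single_apply, Matrix.vecHead,
    Matrix.vecTail] at h2 h0 h6 h11 h8
  intro i; fin_cases i <;> simp <;> linarith

lemma liW1 : LinearIndependent ℝ vW1 := by
  rw [Fintype.linearIndependent_iff]
  intro g hg
  have h2 := congrFun hg 2
  have h0 := congrFun hg 0
  have h8 := congrFun hg 8
  simp [vW1, eF, Fin.sum_univ_three, Pi.single_apply, Matrix.vecHead,
    Matrix.vecTail] at h2 h0 h8
  intro i; fin_cases i <;> simp <;> linarith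

lemma liW2 : LinearIndependent ℝ vW2 := by
  rw [Fintype.linearIndependent_iff]
  intro g hg
  have h5 := congrFun hg 5
  have h0 := congrFun hg 0
  have h6 := congrFun hg 6
  simp [vW2, eF, Fin.sum_univ_three, Pi.single_apply, Matrix.vecHead,
    Matrix.vecTail] at h5 h0 h6
  intro i; fin_cases i <;> simp <;> linarith

lemma VspanEq : Vspan = Submodule.span ℝ (Set.range vV) := by
  apply le_antisymm
  · rw [Vspan]
    apply Submodule.span_le.mpr
    rintro x hx
    have m0 : vV 0 ∈ Submodule.span ℝ (Set.range vV) :=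
      Submodule.subset_span ⟨0, rfl⟩
    have m1 : vV 1 ∈ Submodule.span ℝ (Set.range vV) :=
      Submodule.subset_span ⟨1, rfl⟩
    have m2 : vV 2 ∈ Submodule.span ℝ (Set.range vV) :=
      Submodule.subset_span ⟨2, rfl⟩
    have m3 : vV 3 ∈ Submodule.span ℝ (Set.range vV) :=
      Submodule.subset_span ⟨3, rfl⟩
    have m4 : vV 4 ∈ Submodule.span ℝ (Set.range vV) :=
      Submodule.subset_span ⟨4, rfl⟩
    simp only [vV, Matrix.cons_val_zero, Matrix.cons_val_one, Matrix.head_cons,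
      Matrix.cons_val_two, Matrix.tail_cons, Matrix.cons_val_three,
      Matrix.cons_val_four] at m0 m1 m2 m3 m4
    simp only [Set.mem_insert_iff, Set.mem_singleton_iff] at hx
    rcases hx with h|h|h|h|h|h|h|h|h <;> subst h
    · exact m0
    · have : eF 5 - eF 0 - eF 2 = (eF 5 - eF 0) - eF 2 := by abel
      rw [this]; exact sub_mem m1 m0
    · have : eF 0 + eF 2 - eF 5 = eF 2 - (eF 5 - eF 0) := by abel
      rw [this]; exact sub_mem m0 m1
    · exact neg_mem m2
    · exact neg_mem m0
    · exact m3
    · have : eF 0 + eF 6 - eF 11 = eF 6 - (eF 11 - eF 5) - (eF 5 - eF 0) := by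
        abel
      rw [this]; exact sub_mem (sub_mem m2 m3) m1
    · exact m4
    · rw [show eF 7 - eF 8 = -(eF 8 - eF 7) from by abel]; exact neg_mem m4
  · apply Submodule.span_le.mpr
    rintro x ⟨i, rfl⟩
    have g0 : eF 2 ∈ Vspan := Submodule.subset_span (by simp [Vspan])
    have g1 : eF 5 - eF 0 - eF 2 ∈ Vspan := Submodule.subset_span (by simp [Vspan])
    have g3 : -eF 6 ∈ Vspan := Submodule.subset_span (by simp [Vspan])
    have g5 : eF 11 - eF 5 ∈ Vspan := Submodule.subset_span (by simp [Vspan])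
    have g7 : eF 8 - eF 7 ∈ Vspan := Submodule.subset_span (by simp [Vspan])
    fin_cases i <;>
      simp only [vV, Matrix.cons_val_zero, Matrix.cons_val_one, Matrix.head_cons,
        Matrix.cons_val_two, Matrix.tail_cons, Matrix.cons_val_three,
        Matrix.cons_val_four]
    · exact g0
    · have : eF 5 - eF 0 = (eF 5 - eF 0 - eF 2) + eF 2 := by abel
      rw [this]; exact add_mem g1 g0
    · have : eF 6 = -(-eF 6) := by abel
      rw [this]; exact neg_mem g3
    · exact g5
    · exact g7

lemma W1spanEq : W1span = Submodule.span ℝ (Set.range vW1) := by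
  apply le_antisymm
  · rw [W1span]
    apply Submodule.span_le.mpr
    rintro x hx
    have m0 : vW1 0 ∈ Submodule.span ℝ (Set.range vW1) :=
      Submodule.subset_span ⟨0, rfl⟩
    have m1 : vW1 1 ∈ Submodule.span ℝ (Set.range vW1) :=
      Submodule.subset_span ⟨1, rfl⟩
    have m2 : vW1 2 ∈ Submodule.span ℝ (Set.range vW1) :=
      Submodule.subset_span ⟨2, rfl⟩
    simp only [vW1, Matrix.cons_val_zero, Matrix.cons_val_one, Matrix.head_cons,
      Matrix.cons_val_two, Matrix.tail_cons] at m0 m1 m2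
    simp only [Set.mem_insert_iff, Set.mem_singleton_iff] at hx
    rcases hx with h|h|h|h|h|h <;> subst h
    · exact m0
    · have : eF 5 - eF 0 - eF 2 = (eF 5 - eF 0) - eF 2 := by abel
      rw [this]; exact sub_mem m1 m0
    · have : eF 0 + eF 2 - eF 5 = eF 2 - (eF 5 - eF 0) := by abel
      rw [this]; exact sub_mem m0 m1
    · exact m2
    · have : eF 7 - eF 8 = -(eF 8 - eF 7) := by abel
      rw [this]; exact neg_mem m2
    · exact neg_mem m0
  · apply Submodule.span_le.mpr
    rintro x ⟨i, rfl⟩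
    have g0 : eF 2 ∈ W1span := Submodule.subset_span (by simp [W1span])
    have g1 : eF 5 - eF 0 - eF 2 ∈ W1span := Submodule.subset_span (by simp [W1span])
    have g3 : eF 8 - eF 7 ∈ W1span := Submodule.subset_span (by simp [W1span])
    fin_cases i <;>
      simp only [vW1, Matrix.cons_val_zero, Matrix.cons_val_one, Matrix.head_cons,
        Matrix.cons_val_two, Matrix.tail_cons]
    · exact g0
    · have : eF 5 - eF 0 = (eF 5 - eF 0 - eF 2) + eF 2 := by abel
      rw [this]; exact add_mem g1 g0
    · exact g3

lemma W2spanEq : W2span = Submodule.span ℝ (Set.range vW2) := by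
  rw [W2span]
  congr 1
  rw [show (Set.range vW2) =
      ({-eF 6, eF 11 - eF 5, eF 0 + eF 6 - eF 11} : Set (Fin 15 → ℝ)) by
    ext x
    simp [vW2, Fin.exists_fin_succ, Matrix.vecHead, Matrix.vecTail, or_assoc]
    tauto]

/-- `dim V = 5`, `dim W_1 = 3`, `dim W_2 = 3`; in particular
`dim W_1 + dim W_2 = 6 > 5 = dim V`, so the sum `W_1 + W_2` is not direct
(`W_1` and `W_2` are not disjoint): `N_FM` is a dependent subnetwork of
`N_{F,1} ∪ N_{F,3}`. -/
theorem NFM_dependent_subnetwork :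
    Module.finrank ℝ Vspan = 5 ∧
    Module.finrank ℝ W1span = 3 ∧
    Module.finrank ℝ W2span = 3 ∧
    3 + 3 > 5 ∧
    ¬ Disjoint W1span W2span := by
  refine ⟨?_, ?_, ?_, by norm_num, ?_⟩
  · rw [VspanEq, finrank_span_eq_card liV]; simp
  · rw [W1spanEq, finrank_span_eq_card liW1]; simp
  · rw [W2spanEq, finrank_span_eq_card liW2]; simp
  · intro hd
    have h1 : eF 0 - eF 5 ∈ W1span := by
      have : eF 0 - eF 5 = (eF 0 + eF 2 - eF 5) + (-eF 2) := by abel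
      rw [this]
      exact add_mem (Submodule.subset_span (by simp [W1span]))
        (Submodule.subset_span (by simp [W1span]))
    have h2 : eF 0 - eF 5 ∈ W2span := by
      have : eF 0 - eF 5 = (-eF 6) + (eF 11 - eF 5) + (eF 0 + eF 6 - eF 11) := by
        abel
      rw [this]
      exact add_mem (add_mem (Submodule.subset_span (by simp [W2span]))
        (Submodule.subset_span (by simp [W2span])))
        (Submodule.subset_span (by simp [W2span]))
    have h0 := Submodule.disjoint_def.mp hd _ h1 h2
    have := congrFun h0 0
    simp [eF, Pi.single_apply] at this
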